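/- Let m ≥ 1 and L₁ < L₂ be real numbers, and let v : [L₁, L₂] → ℝ be a C^m function satisfying |v'(y)| + ⋯ + |v^{(m)}(y)| > 0 for all y ∈ [L₁, L₂]. Then there exist constants C₀' > 0 and δ̂₀ ∈ (0, 1) such that for every δ ∈ (0, δ̂₀] and every λ ∈ ℝ, the Lebesgue measure of the δ-neighborhood 𝓔^m_{λ,δ} = {y ∈ [L₁, L₂] : dist(y, E^m_{λ,δ}) < δ} of E^m_{λ,δ} = {y ∈ [L₁, L₂] : |v(y) − λ| < δ^m} satisfies m(𝓔^m_{λ,δ}) ≤ C₀' δ. -/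

import Mathlib

/-!
By compactness, the interval is covered by finitely many balls on each of which some derivative
`v^(j)`, `1 ≤ j ≤ m`, satisfies `|v^(j)| ≥ c`. On such a ball set `h i = c ^ i * δ ^ (m - i)`.
If `|v^(i+1)| ≥ h (i+1)` on an interval, the mean value theorem confines `{|v^(i)| < h i}` to a
window of radius `2 h i / h (i+1) = 2δ/c` around any of its points, and off that window
`|v^(i)| ≥ h i` on two intervals. Inducting on `i` covers `{|v - λ| < δ ^ m}` by at most `3 ^ m`
intervals of radius `2δ/c` per ball, so its `δ`-neighbourhood has measure `O(δ)`, uniformly in `λ`.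
-/

open Set MeasureTheory ENNReal Metric

theorem iteratedDerivWithin_sub_const {f : ℝ → ℝ} {s : Set ℝ} {n : ℕ} (hn : 0 < n) (c : ℝ) :
    iteratedDerivWithin n (fun y => f y - c) s = iteratedDerivWithin n f s := by
  obtain ⟨n, rfl⟩ := Nat.exists_eq_succ_of_ne_zero hn.ne'
  rw [iteratedDerivWithin_succ', iteratedDerivWithin_succ', derivWithin_sub_const_fun]

theorem ContDiffOn.hasDerivWithinAt_iteratedDerivWithin {f : ℝ → ℝ} {s : Set ℝ} {m i : ℕ}
    (hf : ContDiffOn ℝ m f s) (hs : UniqueDiffOn ℝ s) (hi : i < m) {x : ℝ} (hx : x ∈ s) :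
    HasDerivWithinAt (iteratedDerivWithin i f s) (iteratedDerivWithin (i + 1) f s x) s x := by
  rw [iteratedDerivWithin_succ]
  exact ((hf.differentiableOn_iteratedDerivWithin (mod_cast hi) hs) x hx).hasDerivWithinAt

theorem mul_abs_sub_le_abs_sub_of_le_abs_deriv {f f' : ℝ → ℝ} {I : Set ℝ} (hI : I.OrdConnected)
    (hf : ∀ x ∈ I, HasDerivWithinAt f (f' x) I x) {c : ℝ} (hc : ∀ x ∈ I, c ≤ |f' x|)
    {x y : ℝ} (hx : x ∈ I) (hy : y ∈ I) : c * |x - y| ≤ |f x - f y| := by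
  wlog hxy : x < y generalizing x y
  · rcases (not_lt.mp hxy).eq_or_lt with rfl | hyx
    · simp
    · rw [abs_sub_comm x, abs_sub_comm (f x)]
      exact this hy hx hyx
  have hsub : Icc x y ⊆ I := hI.out hx hy
  obtain ⟨ξ, hξ, hslope⟩ := exists_hasDerivAt_eq_slope f f' hxy
    (fun z hz => (hf z (hsub hz)).continuousWithinAt.mono hsub)
    (fun z hz => (hf z (hsub (Ioo_subset_Icc_self hz))).hasDerivAt
      (Filter.mem_of_superset (Ioo_mem_nhds hz.1 hz.2) (Ioo_subset_Icc_self.trans hsub)))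
  have hyx : 0 < y - x := sub_pos.mpr hxy
  calc c * |x - y| ≤ |f' ξ| * (y - x) := by
        rw [abs_sub_comm, abs_of_pos hyx]
        exact mul_le_mul_of_nonneg_right (hc ξ (hsub (Ioo_subset_Icc_self hξ))) hyx.le
    _ = |f x - f y| := by
        rw [hslope, abs_div, abs_of_pos hyx, div_mul_cancel₀ _ hyx.ne', abs_sub_comm]

theorem exists_sublevel_subset_biUnion_closedBall {D : ℕ → ℝ → ℝ} {s : Set ℝ} {h : ℕ → ℝ} {ρ : ℝ}
    (j : ℕ) (hD : ∀ i < j, ∀ x ∈ s, HasDerivWithinAt (D i) (D (i + 1) x) s x)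
    (hh : ∀ i < j, 0 < h (i + 1) ∧ 2 * h i ≤ ρ * h (i + 1))
    {I : Set ℝ} (hI : I.OrdConnected) (hIs : I ⊆ s) (hDj : ∀ y ∈ I, h j ≤ |D j y|) :
    ∃ T : Finset ℝ, T.card ≤ 3 ^ j ∧ {y ∈ I | |D 0 y| < h 0} ⊆ ⋃ p ∈ T, closedBall p ρ := by
  induction j generalizing I with
  | zero =>
    refine ⟨∅, by simp, fun y hy => absurd (hDj y hy.1) (not_le.mpr hy.2)⟩
  | succ j ih =>
    have ih' := @ih (fun i hi => hD i (by omega)) (fun i hi => hh i (by omega))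
    by_cases hgood : ∀ y ∈ I, h j ≤ |D j y|
    · obtain ⟨T, hT, hcover⟩ := ih' hI hIs hgood
      exact ⟨T, hT.trans (Nat.pow_le_pow_right (by norm_num) j.le_succ), hcover⟩
    push Not at hgood
    obtain ⟨y₀, hy₀, hDy₀⟩ := hgood
    obtain ⟨hpos, hratio⟩ := hh j j.lt_succ_self
    have hnear : ∀ y ∈ I, |D j y| < h j → |y - y₀| ≤ ρ := by
      intro y hy hDy
      have hsep := mul_abs_sub_le_abs_sub_of_le_abs_deriv hI
        (fun x hx => (hD j j.lt_succ_self x (hIs hx)).mono hIs) hDj hy hy₀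
      have := abs_sub (D j y) (D j y₀)
      refine le_of_mul_le_mul_left ?_ hpos
      nlinarith
    have hfar : ∀ y ∈ I, ρ < |y - y₀| → h j ≤ |D j y| := fun y hy hρ =>
      not_lt.mp fun hDy => (hnear y hy hDy).not_gt hρ
    obtain ⟨T₁, hT₁, hcover₁⟩ := ih' (I := I ∩ Iio (y₀ - ρ)) (hI.inter ordConnected_Iio)
      (inter_subset_left.trans hIs) fun y hy =>
        hfar y hy.1 (lt_abs.mpr (.inr (by linarith [show y < y₀ - ρ from hy.2])))
    obtain ⟨T₂, hT₂, hcover₂⟩ := ih' (I := I ∩ Ioi (y₀ + ρ)) (hI.inter ordConnected_Ioi)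
      (inter_subset_left.trans hIs) fun y hy =>
        hfar y hy.1 (lt_abs.mpr (.inl (by linarith [show y₀ + ρ < y from hy.2])))
    classical
    refine ⟨insert y₀ (T₁ ∪ T₂), ?_, ?_⟩
    · calc (insert y₀ (T₁ ∪ T₂)).card ≤ T₁.card + T₂.card + 1 :=
            (Finset.card_insert_le _ _).trans (by gcongr; exact Finset.card_union_le _ _)
        _ ≤ 3 ^ (j + 1) := by rw [pow_succ]; have := Nat.one_le_pow j 3 (by norm_num); omega
    · rintro y ⟨hy, hDy⟩
      by_cases hclose : |y - y₀| ≤ ρ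
      · exact mem_biUnion (Finset.mem_insert_self _ _) (by rwa [mem_closedBall, Real.dist_eq])
      obtain ⟨p, hp, hyp⟩ : ∃ p ∈ T₁ ∪ T₂, y ∈ closedBall p ρ := by
        rcases lt_abs.mp (not_le.mp hclose) with hgt | hlt
        · obtain ⟨p, hp, hyp⟩ := mem_iUnion₂.mp (hcover₂ ⟨⟨hy, mem_Ioi.mpr (by linarith)⟩, hDy⟩)
          exact ⟨p, Finset.mem_union_right _ hp, hyp⟩
        · obtain ⟨p, hp, hyp⟩ := mem_iUnion₂.mp (hcover₁ ⟨⟨hy, mem_Iio.mpr (by linarith)⟩, hDy⟩)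
          exact ⟨p, Finset.mem_union_left _ hp, hyp⟩
      exact mem_biUnion (Finset.mem_insert_of_mem hp) hyp

theorem IsCompact.exists_pos_le_abs_of_forall_exists_ne_zero {α ι : Type*} [PseudoMetricSpace α]
    [Fintype ι] {K : Set α} (hK : IsCompact K) {g : ι → α → ℝ} (hg : ∀ i, ContinuousOn (g i) K)
    (hne : ∀ y ∈ K, ∃ i, g i y ≠ 0) :
    ∃ ε > 0, ∃ r > 0, ∀ x ∈ K, ∃ i, ∀ y ∈ K, dist y x < r → ε ≤ |g i y| := by
  rcases K.eq_empty_or_nonempty with rfl | hKne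
  · exact ⟨1, one_pos, 1, one_pos, by simp⟩
  set G : α → ι → ℝ := fun y i => g i y
  have hG : ContinuousOn G K := continuousOn_pi.mpr hg
  obtain ⟨y₁, hy₁, hmin⟩ := hK.exists_isMinOn hKne hG.norm
  have hε : 0 < ‖G y₁‖ := by
    obtain ⟨i, hi⟩ := hne y₁ hy₁
    exact norm_pos_iff.mpr fun h => hi (congrFun h i)
  obtain ⟨r, hr, hclose⟩ := uniformContinuousOn_iff.mp
    (hK.uniformContinuousOn_of_continuous hG) _ (half_pos hε)
  refine ⟨‖G y₁‖ / 2, half_pos hε, r, hr, fun x hx => ?_⟩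
  obtain ⟨i, hi⟩ : ∃ i, ‖G y₁‖ ≤ |g i x| := by
    by_contra! hsmall
    exact (hmin hx).not_gt ((pi_norm_lt_iff hε).mpr hsmall)
  refine ⟨i, fun y hy hyx => ?_⟩
  have := (dist_le_pi_dist (G x) (G y) i).trans_lt (hclose x hx y hy (dist_comm y x ▸ hyx))
  rw [Real.dist_eq] at this
  linarith [abs_sub_abs_le_abs_sub (g i x) (g i y)]

theorem volume_thickening_biUnion_closedBall_le (T : Finset ℝ) {δ ρ : ℝ} (hδ : 0 < δ)
    (hρ : 0 ≤ ρ) :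
    volume (thickening δ (⋃ p ∈ T, closedBall p ρ)) ≤ ENNReal.ofReal (T.card * (2 * (δ + ρ))) := by
  simp only [thickening_iUnion]
  calc volume (⋃ p ∈ T, thickening δ (closedBall p ρ))
      ≤ ∑ p ∈ T, volume (thickening δ (closedBall p ρ)) := measure_biUnion_finset_le _ _
    _ = ENNReal.ofReal (T.card * (2 * (δ + ρ))) := by
      simp only [thickening_closedBall hδ hρ, Real.volume_ball, Finset.sum_const, nsmul_eq_mul]
      rw [ENNReal.ofReal_mul (Nat.cast_nonneg _), ENNReal.ofReal_natCast]

theorem ContDiffOn.exists_sublevel_subset_biUnion_closedBall {v : ℝ → ℝ} {K I : Set ℝ} {m j : ℕ}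
    (hv : ContDiffOn ℝ m v K) (hK : UniqueDiffOn ℝ K) (hI : I.OrdConnected) (hIK : I ⊆ K)
    (hj : 1 ≤ j) (hjm : j ≤ m) {c δ : ℝ} (hc : 0 < c) (hc1 : c ≤ 1) (hδ : 0 < δ) (hδ1 : δ ≤ 1)
    (hlower : ∀ y ∈ I, c ≤ |iteratedDerivWithin j v K y|) (lam : ℝ) :
    ∃ T : Finset ℝ, T.card ≤ 3 ^ m ∧
      {y ∈ I | |v y - lam| < δ ^ m} ⊆ ⋃ p ∈ T, closedBall p (2 * δ / c) := by
  have hvlam : ContDiffOn ℝ m (fun y => v y - lam) K := hv.sub contDiffOn_const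
  obtain ⟨T, hT, hcover⟩ := _root_.exists_sublevel_subset_biUnion_closedBall
    (D := fun i => iteratedDerivWithin i (fun y => v y - lam) K)
    (h := fun i => c ^ i * δ ^ (m - i)) (ρ := 2 * δ / c) j
    (fun i hi x hx => hvlam.hasDerivWithinAt_iteratedDerivWithin hK (hi.trans_le hjm) hx)
    (fun i hi => by
      refine ⟨by positivity, le_of_eq ?_⟩
      rw [show m - i = m - (i + 1) + 1 by omega, pow_succ, pow_succ]
      field_simp)
    hI hIK (fun y hy => by
      rw [iteratedDerivWithin_sub_const (by omega)]
      calc c ^ j * δ ^ (m - j) ≤ c * 1 :=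
            mul_le_mul (pow_le_of_le_one hc.le hc1 (by omega)) (pow_le_one₀ hδ.le hδ1)
              (by positivity) hc.le
        _ = c := mul_one c
        _ ≤ _ := hlower y hy)
  refine ⟨T, hT.trans (Nat.pow_le_pow_right (by norm_num) hjm), ?_⟩
  simpa using hcover

theorem ContDiffOn.exists_sublevel_subset_biUnion_closedBall_of_nondegenerate {m : ℕ} {L₁ L₂ : ℝ}
    (hL : L₁ < L₂) {v : ℝ → ℝ} (hv : ContDiffOn ℝ m v (Icc L₁ L₂))
    (hnd : ∀ y ∈ Icc L₁ L₂, 0 < ∑ j ∈ Finset.Icc 1 m, |iteratedDerivWithin j v (Icc L₁ L₂) y|) :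
    ∃ c > 0, ∃ N > 0, ∀ δ, 0 < δ → δ ≤ 1 → ∀ lam, ∃ T : Finset ℝ, T.card ≤ N ∧
      {z ∈ Icc L₁ L₂ | |v z - lam| < δ ^ m} ⊆ ⋃ p ∈ T, closedBall p (2 * δ / c) := by
  set K := Icc L₁ L₂
  have hK : UniqueDiffOn ℝ K := uniqueDiffOn_Icc hL
  obtain ⟨ε, hε, r, hr, hlower⟩ := isCompact_Icc.exists_pos_le_abs_of_forall_exists_ne_zero
    (g := fun j : Finset.Icc 1 m => iteratedDerivWithin j v K)
    (fun j => hv.continuousOn_iteratedDerivWithin (mod_cast (Finset.mem_Icc.mp j.2).2) hK)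
    (fun y hy => by
      obtain ⟨j, hj, hne⟩ := Finset.exists_ne_zero_of_sum_ne_zero (hnd y hy).ne'
      exact ⟨⟨j, hj⟩, abs_ne_zero.mp hne⟩)
  obtain ⟨t, htK, hcover⟩ := isCompact_Icc.elim_nhds_subcover (fun x : ℝ => ball x r)
    fun x _ => ball_mem_nhds x hr
  have ht : 0 < t.card := by
    obtain ⟨x, hx, -⟩ := mem_iUnion₂.mp (hcover (left_mem_Icc.mpr hL.le))
    exact Finset.card_pos.mpr ⟨x, hx⟩
  refine ⟨min ε 1, lt_min hε one_pos, t.card * 3 ^ m, by positivity, fun δ hδ hδ1 lam => ?_⟩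
  have hpiece : ∀ x ∈ t, ∃ T : Finset ℝ, T.card ≤ 3 ^ m ∧
      {y ∈ K ∩ ball x r | |v y - lam| < δ ^ m} ⊆ ⋃ p ∈ T, closedBall p (2 * δ / min ε 1) := by
    intro x hx
    obtain ⟨⟨j, hj⟩, hjx⟩ := hlower x (htK x hx)
    obtain ⟨hj1, hjm⟩ := Finset.mem_Icc.mp hj
    have hI : (K ∩ ball x r).OrdConnected := by
      rw [Real.ball_eq_Ioo]; exact ordConnected_Icc.inter ordConnected_Ioo
    exact hv.exists_sublevel_subset_biUnion_closedBall hK hI inter_subset_left hj1 hjm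
      (lt_min hε one_pos) (min_le_right _ _) hδ hδ1
      (fun y hy => (min_le_left _ _).trans (hjx y hy.1 hy.2)) lam
  choose! T hTcard hTcover using hpiece
  classical
  refine ⟨t.biUnion T, Finset.card_biUnion_le_card_mul _ _ _ hTcard, ?_⟩
  rintro z ⟨hzK, hz⟩
  obtain ⟨x, hx, hzx⟩ := mem_iUnion₂.mp (hcover hzK)
  obtain ⟨p, hp, hzp⟩ := mem_iUnion₂.mp (hTcover x hx ⟨⟨hzK, hzx⟩, hz⟩)
  exact mem_biUnion (Finset.mem_biUnion.mpr ⟨x, hx, hp⟩) hzp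

theorem measure_estimate_neighborhood_uniform_general
    (m : ℕ) (L₁ L₂ : ℝ) (hL : L₁ < L₂)
    (v : ℝ → ℝ) (hv : ContDiffOn ℝ m v (Set.Icc L₁ L₂))
    (hnd : ∀ y ∈ Set.Icc L₁ L₂,
      0 < ∑ j ∈ Finset.Icc 1 m, |iteratedDerivWithin j v (Set.Icc L₁ L₂) y|) :
    ∃ C₀' > 0, ∃ δ₀ : ℝ, 0 < δ₀ ∧ δ₀ < 1 ∧
      ∀ δ : ℝ, 0 < δ → δ ≤ δ₀ → ∀ lam : ℝ,
        volume {y ∈ Set.Icc L₁ L₂ |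
            EMetric.infEdist y {z ∈ Set.Icc L₁ L₂ | |v z - lam| < δ ^ m} <
              ENNReal.ofReal δ}
          ≤ ENNReal.ofReal (C₀' * δ) := by
  obtain ⟨c, hc, N, hN, hcover⟩ :=
    hv.exists_sublevel_subset_biUnion_closedBall_of_nondegenerate hL hnd
  refine ⟨N * (2 * (1 + 2 / c)), by positivity, 1 / 2, by norm_num, by norm_num, ?_⟩
  intro δ hδ hδ₀ lam
  obtain ⟨T, hT, hsub⟩ := hcover δ hδ (by linarith) lam
  calc _ ≤ volume (thickening δ (⋃ p ∈ T, closedBall p (2 * δ / c))) :=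
        measure_mono fun y hy => thickening_subset_of_subset δ hsub hy.2
    _ ≤ ENNReal.ofReal (T.card * (2 * (δ + 2 * δ / c))) :=
        volume_thickening_biUnion_closedBall_le T hδ (by positivity)
    _ ≤ ENNReal.ofReal (N * (2 * (1 + 2 / c)) * δ) := by
      refine ENNReal.ofReal_le_ofReal ?_
      calc _ ≤ (N : ℝ) * (2 * (δ + 2 * δ / c)) := by gcongr
        _ = _ := by ring

/-- uniform-in-`λ` measure estimate for the δ-neighborhood
`𝓔^m_{λ,δ}` on a compact interval.  If `v ∈ C^m([L₁,L₂])` satisfies the `m`-th order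
non-degeneracy condition, then there are `C₀' > 0` and `δ̂₀ ∈ (0,1)` such that for every
`δ ∈ (0, δ̂₀]` and every `λ ∈ ℝ`, `m(𝓔^m_{λ,δ}) ≤ C₀' δ`, where
`𝓔^m_{λ,δ} = {y ∈ [L₁,L₂] : dist(y, E^m_{λ,δ}) < δ}` (with `dist(y, ∅) = ∞`) and
`E^m_{λ,δ} = {y ∈ [L₁,L₂] : |v(y) − λ| < δ^m}`. -/
theorem measure_estimate_neighborhood_uniform
    (m : ℕ) (hm : 1 ≤ m) (L₁ L₂ : ℝ) (hL : L₁ < L₂)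
    (v : ℝ → ℝ) (hv : ContDiffOn ℝ m v (Set.Icc L₁ L₂))
    (hnd : ∀ y ∈ Set.Icc L₁ L₂,
      0 < ∑ j ∈ Finset.Icc 1 m, |iteratedDerivWithin j v (Set.Icc L₁ L₂) y|) :
    ∃ C₀' > 0, ∃ δ₀ : ℝ, 0 < δ₀ ∧ δ₀ < 1 ∧
      ∀ δ : ℝ, 0 < δ → δ ≤ δ₀ → ∀ lam : ℝ,
        volume {y ∈ Set.Icc L₁ L₂ |
            EMetric.infEdist y {z ∈ Set.Icc L₁ L₂ | |v z - lam| < δ ^ m} <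
              ENNReal.ofReal δ}
          ≤ ENNReal.ofReal (C₀' * δ) :=
  measure_estimate_neighborhood_uniform_general m L₁ L₂ hL v hv hnd
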